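/- arXiv:1705.07370 — 4 statements merged into one kernel-verified Lean document; each statement's English description precedes it below -/
import Mathlib

section
/- Let U be a divisible torsion-free abelian group and let X ⊆ U. Then X is convex if and only if ∏_n X = X^n for every n ≥ 1, i.e., if and only if for every n ≥ 1 the n-fold product set of X equals the set of n-th powers of elements of X. -/
/-- The `n`-fold product set `X ⋯ X` (`n` times) of a subset `X` of a monoid:
the set of all products `x₁ ⋯ xₙ` with `x₁, …, xₙ ∈ X`. -/
def nProdset {G : Type*} [Monoid G] (n : ℕ) (X : Set G) : Set G :=
  {y | ∃ f : Fin n → G, (∀ i, f i ∈ X) ∧ (List.ofFn f).prod = y}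

/-- A subset `X` of an abelian group is convex if for every `a, b ∈ X` and all
`m, n ∈ ℕ` not both zero, every solution `x` of `x ^ (m + n) = a ^ m * b ^ n`
lies in `X`. -/
def IsConvexSubset {G : Type*} [CommGroup G] (X : Set G) : Prop :=
  ∀ a ∈ X, ∀ b ∈ X, ∀ m n : ℕ, ¬(m = 0 ∧ n = 0) →
    ∀ x : G, x ^ (m + n) = a ^ m * b ^ n → x ∈ X

open scoped Pointwise

section Monoid

variable {M : Type*} [Monoid M] {X : Set M}

lemma nProdset_one : nProdset 1 X = X := by
  ext y
  constructor
  · rintro ⟨f, hf, rfl⟩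
    simpa using hf 0
  · intro hy
    exact ⟨fun _ => y, fun _ => hy, by simp⟩

lemma nProdset_add (m n : ℕ) : nProdset (m + n) X = nProdset m X * nProdset n X := by
  ext y
  constructor
  · rintro ⟨f, hf, rfl⟩
    rw [List.ofFn_add, List.prod_append]
    exact Set.mul_mem_mul ⟨_, fun _ => hf _, rfl⟩ ⟨_, fun _ => hf _, rfl⟩
  · rintro ⟨_, ⟨f, hf, rfl⟩, _, ⟨g, hg, rfl⟩, rfl⟩
    refine ⟨Fin.append f g, Fin.addCases (fun i => ?_) (fun i => ?_), by simp [List.ofFn_fin_append]⟩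
    · simpa using hf i
    · simpa using hg i

lemma nProdset_succ (n : ℕ) : nProdset (n + 1) X = nProdset n X * X := by
  rw [nProdset_add, nProdset_one]

lemma image_pow_subset_nProdset (n : ℕ) : (fun x : M => x ^ n) '' X ⊆ nProdset n X := by
  rintro _ ⟨a, ha, rfl⟩
  exact ⟨fun _ => a, fun _ => ha, by simp⟩

end Monoid

section CommGroup

variable {G : Type*} [CommGroup G] {X : Set G}

/-- The `(k+1)`-fold product `a ^ k * b` has a `(k+1)`-th root by divisibility, and convexity
with exponents `k` and `1` puts that root in `X`. -/
lemma IsConvexSubset.nProdset_subset_image_pow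
    (hdiv : ∀ u : G, ∀ n : ℕ, 1 ≤ n → ∃ x : G, x ^ n = u) (hX : IsConvexSubset X)
    {n : ℕ} (hn : 1 ≤ n) : nProdset n X ⊆ (fun x : G => x ^ n) '' X := by
  induction n, hn using Nat.le_induction with
  | base => simp [nProdset_one]
  | succ k hk ih =>
    rw [nProdset_succ]
    rintro _ ⟨_, hz, b, hb, rfl⟩
    obtain ⟨a, ha, rfl⟩ := ih hz
    obtain ⟨x, hx⟩ := hdiv (a ^ k * b) (k + 1) (by omega)
    exact ⟨x, hX a ha b hb k 1 (by omega) x (by rw [hx, pow_one]), hx⟩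

lemma isConvexSubset_of_nProdset_subset_image_pow
    (htf : ∀ x : G, ∀ n : ℕ, 1 ≤ n → x ^ n = 1 → x = 1)
    (h : ∀ n : ℕ, 1 ≤ n → nProdset n X ⊆ (fun x : G => x ^ n) '' X) : IsConvexSubset X := by
  intro a ha b hb m n hmn x hx
  have hpos : 1 ≤ m + n := by omega
  have hprod : a ^ m * b ^ n ∈ nProdset (m + n) X := by
    rw [nProdset_add]
    exact Set.mul_mem_mul (image_pow_subset_nProdset m ⟨a, ha, rfl⟩)
      (image_pow_subset_nProdset n ⟨b, hb, rfl⟩)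
  obtain ⟨c, hc, hcx⟩ := h (m + n) hpos hprod
  have hroot : (x * c⁻¹) ^ (m + n) = 1 := by rw [mul_pow, inv_pow, hx, ← hcx, mul_inv_cancel]
  rwa [mul_inv_eq_one.mp (htf _ _ hpos hroot)]

end CommGroup

/-- Let `U` be a divisible torsion-free abelian group and `X ⊆ U`. Then `X` is convex
iff for every `n ≥ 1` the `n`-fold product set of `X` equals the set of `n`-th powers
of elements of `X`. -/
theorem stmt2 (U : Type*) [CommGroup U]
    (hdiv : ∀ u : U, ∀ n : ℕ, 1 ≤ n → ∃ x : U, x ^ n = u)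
    (htf : ∀ x : U, ∀ n : ℕ, 1 ≤ n → x ^ n = 1 → x = 1)
    (X : Set U) :
    IsConvexSubset X ↔ ∀ n : ℕ, 1 ≤ n → nProdset n X = (fun x : U => x ^ n) '' X :=
  ⟨fun hX n hn => (hX.nProdset_subset_image_pow hdiv hn).antisymm (image_pow_subset_nProdset n),
    fun h => isConvexSubset_of_nProdset_subset_image_pow htf fun n hn => (h n hn).subset⟩
end

section
/- Let U be a divisible torsion-free abelian group, Z ⊆ U a subset, and k ≥ 1. Then the convex hull of the set of k-th roots of Z equals the set of k-th roots of the convex hull of Z; that is, ch(Z^{1/k}) = (ch(Z))^{1/k}, where Z^{1/k} = {x ∈ U : x^k ∈ Z}. -/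
/-!
The map `x ↦ x ^ k` is a group endomorphism, and in a divisible torsion-free abelian group it is
bijective. Convex hulls are compatible with preimages under any homomorphism in one direction,
and under a bijective one in both, since the factors `aᵢ` can then be pulled back along it.
-/

/-- The convex hull `ch(X)` of a subset `X` of an abelian group: the set of all `x`
such that `x ^ n = a₁ ⋯ aₙ` for some `n ≥ 1` and some `a₁, …, aₙ ∈ X`. -/
def convexHullGrp {G : Type*} [CommGroup G] (X : Set G) : Set G :=
  {x | ∃ n : ℕ, 1 ≤ n ∧ ∃ f : Fin n → G, (∀ i, f i ∈ X) ∧ x ^ n = (List.ofFn f).prod}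

section

variable {G H : Type*} [CommGroup G] [CommGroup H]

lemma convexHullGrp_preimage_subset (f : G →* H) (Z : Set H) :
    convexHullGrp (f ⁻¹' Z) ⊆ f ⁻¹' convexHullGrp Z := by
  rintro x ⟨n, hn, g, hg, hx⟩
  exact ⟨n, hn, f ∘ g, hg, by rw [← map_pow, hx, map_list_prod, List.map_ofFn]⟩

lemma convexHullGrp_preimage_of_bijective (f : G →* H) (hf : Function.Bijective f)
    (Z : Set H) : convexHullGrp (f ⁻¹' Z) = f ⁻¹' convexHullGrp Z := by
  refine (convexHullGrp_preimage_subset f Z).antisymm ?_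
  rintro x ⟨n, hn, a, ha, hx⟩
  choose g hg using fun i => hf.2 (a i)
  have hfg : f ∘ g = a := funext hg
  refine ⟨n, hn, g, fun i => by simpa [hg i] using ha i, hf.1 ?_⟩
  rw [map_pow, hx, map_list_prod, List.map_ofFn, hfg]

end

lemma pow_bijective_of_divisible_of_torsionFree {U : Type*} [CommGroup U]
    (hdiv : ∀ u : U, ∀ n : ℕ, 1 ≤ n → ∃ x : U, x ^ n = u)
    (htf : ∀ x : U, ∀ n : ℕ, 1 ≤ n → x ^ n = 1 → x = 1) {k : ℕ} (hk : 1 ≤ k) :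
    Function.Bijective (powMonoidHom k : U →* U) := by
  refine ⟨fun x y hxy => ?_, fun u => hdiv u k hk⟩
  have hquot : (x / y) ^ k = 1 := by
    simpa [div_pow, div_eq_one] using hxy
  exact div_eq_one.mp (htf _ k hk hquot)

/-- Let `U` be a divisible torsion-free abelian group, `Z ⊆ U` and `k ≥ 1`. Then the
convex hull of the set of `k`-th roots of `Z` equals the set of `k`-th roots of the
convex hull of `Z`: `ch(Z^{1/k}) = (ch(Z))^{1/k}`. -/
theorem stmt3 (U : Type*) [CommGroup U]
    (hdiv : ∀ u : U, ∀ n : ℕ, 1 ≤ n → ∃ x : U, x ^ n = u)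
    (htf : ∀ x : U, ∀ n : ℕ, 1 ≤ n → x ^ n = 1 → x = 1)
    (Z : Set U) (k : ℕ) (hk : 1 ≤ k) :
    convexHullGrp {x : U | x ^ k ∈ Z} = {x : U | x ^ k ∈ convexHullGrp Z} :=
  convexHullGrp_preimage_of_bijective (powMonoidHom k : U →* U)
    (pow_bijective_of_divisible_of_torsionFree hdiv htf hk) Z
end

section
/- Let U be a divisible torsion-free abelian group, let Z, X ⊆ U be subsets, and let k ≥ 1. If the convex hull ch(Z) of Z is contained in X^k = {x^k : x ∈ X}, then the convex hull ch(Z^{1/k}) of the set Z^{1/k} = {u ∈ U : u^k ∈ Z} of k-th roots of Z is contained in X. -/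
lemma MonoidHom.map_mem_convexHullGrp {G H : Type*} [CommGroup G] [CommGroup H] (f : G →* H)
    {Z : Set H} {x : G} (hx : x ∈ convexHullGrp (f ⁻¹' Z)) : f x ∈ convexHullGrp Z := by
  obtain ⟨n, hn, a, ha, hxa⟩ := hx
  refine ⟨n, hn, f ∘ a, ha, ?_⟩
  rw [← map_pow, hxa, map_list_prod, List.map_ofFn]

lemma IsMulTorsionFree.of_pow_eq_one {G : Type*} [CommGroup G]
    (h : ∀ x : G, ∀ n : ℕ, 1 ≤ n → x ^ n = 1 → x = 1) : IsMulTorsionFree G :=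
  IsMulTorsionFree.of_not_isOfFinOrder fun x hx hfin =>
    let ⟨n, hn, hxn⟩ := isOfFinOrder_iff_pow_eq_one.mp hfin
    hx (h x n hn hxn)

theorem stmt4_general (U : Type*) [CommGroup U]
    (htf : ∀ x : U, ∀ n : ℕ, 1 ≤ n → x ^ n = 1 → x = 1)
    (Z X : Set U) (k : ℕ) (hk : 1 ≤ k)
    (hZX : convexHullGrp Z ⊆ (fun x : U => x ^ k) '' X) :
    convexHullGrp {u : U | u ^ k ∈ Z} ⊆ X := by
  have := IsMulTorsionFree.of_pow_eq_one htf
  intro x hx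
  obtain ⟨y, hyX, hyx⟩ := hZX ((powMonoidHom k).map_mem_convexHullGrp hx)
  rwa [← pow_left_injective (by omega) hyx]

/-- Let `U` be a divisible torsion-free abelian group, `Z, X ⊆ U` and `k ≥ 1`. If
`ch(Z) ⊆ X^k = {x^k : x ∈ X}`, then `ch(Z^{1/k}) ⊆ X`, where
`Z^{1/k} = {u ∈ U : u^k ∈ Z}`. -/
theorem stmt4 (U : Type*) [CommGroup U]
    (hdiv : ∀ u : U, ∀ n : ℕ, 1 ≤ n → ∃ x : U, x ^ n = u)
    (htf : ∀ x : U, ∀ n : ℕ, 1 ≤ n → x ^ n = 1 → x = 1)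
    (Z X : Set U) (k : ℕ) (hk : 1 ≤ k)
    (hZX : convexHullGrp Z ⊆ (fun x : U => x ^ k) '' X) :
    convexHullGrp {u : U | u ^ k ∈ Z} ⊆ X :=
  stmt4_general U htf Z X k hk hZX
end

section
/- Let Z be a divisible torsion-free abelian group with identity e, and let V be an abelian group. Let W ⊆ Z and let θ : W → V be a local homomorphism. Suppose W₁ ⊆ Z is a symmetric subset (W₁⁻¹ = W₁) with e ∈ W₁ that generates Z (every element of Z is a finite product of elements of W₁), and suppose k ≥ 1 is such that ch(W₁^{1/k}) ⊆ W₁ ⊆ W, where W₁^{1/k} = {x ∈ Z : x^k ∈ W₁}. Then there exists a unique group homomorphism θ̄ : Z → V such that θ̄(x) = θ(x) for every x ∈ ch(W₁^{1/k}); moreover θ̄ is given by θ̄(y₁⋯yₙ) = (θ(y₁^{1/k})⋯θ(yₙ^{1/k}))^k for all n ≥ 1 and y₁,…,yₙ ∈ W₁, where y^{1/k} denotes the unique k-th root of y in Z. -/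
open Pointwise

def IsLocalMulHom {G H : Type*} [Mul G] [Mul H] (W : Set G) (θ : G → H) : Prop :=
  ∀ x y : G, x ∈ W → y ∈ W → x * y ∈ W → θ (x * y) = θ x * θ y

theorem IsLocalMulHom.mono {G H : Type*} [Mul G] [Mul H] {W T : Set G} {θ : G → H}
    (hθ : IsLocalMulHom W θ) (hTW : T ⊆ W) : IsLocalMulHom T θ :=
  fun x y hx hy hxy => hθ x y (hTW hx) (hTW hy) (hTW hxy)

theorem IsLocalMulHom.map_pow_succ {M H : Type*} [Monoid M] [Monoid H] {W : Set M} {θ : M → H}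
    (hθ : IsLocalMulHom W θ) {d : M} {n : ℕ} (hd : ∀ j ≤ n, d ^ (j + 1) ∈ W) :
    θ (d ^ (n + 1)) = θ d ^ (n + 1) := by
  induction n with
  | zero => simp
  | succ n ih =>
    have hdn := hd n n.le_succ
    have hd1 : d ∈ W := by simpa using hd 0 (Nat.zero_le _)
    rw [pow_succ d, hθ _ _ hdn hd1 (by rw [← pow_succ]; exact hd _ le_rfl),
      ih fun j hj => hd j (by omega), ← pow_succ]

section ConvexHull

variable {G : Type*} [CommGroup G] {X : Set G}

theorem mem_convexHullGrp_iff {x : G} : x ∈ convexHullGrp X ↔ ∃ n, 1 ≤ n ∧ x ^ n ∈ X ^ n := by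
  simp only [convexHullGrp, Set.mem_ofPred_eq, Set.mem_pow]
  constructor
  · rintro ⟨n, hn, f, hf, hx⟩
    exact ⟨n, hn, fun i => ⟨f i, hf i⟩, hx.symm⟩
  · rintro ⟨n, hn, f, hx⟩
    exact ⟨n, hn, fun i => f i, fun i => (f i).2, hx.symm⟩

theorem subset_convexHullGrp : X ⊆ convexHullGrp X :=
  fun x hx => mem_convexHullGrp_iff.2 ⟨1, le_rfl, by simpa using hx⟩

theorem mem_convexHullGrp_of_pow_eq_mul (hX : 1 ∈ X) {u v w : G} (hu : u ∈ convexHullGrp X)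
    (hv : v ∈ convexHullGrp X) {α β γ : ℕ} (hγ : 1 ≤ γ) (hαβγ : α + β ≤ γ)
    (hw : w ^ γ = u ^ α * v ^ β) : w ∈ convexHullGrp X := by
  obtain ⟨n, hn, hun⟩ := mem_convexHullGrp_iff.1 hu
  obtain ⟨m, hm, hvm⟩ := mem_convexHullGrp_iff.1 hv
  refine mem_convexHullGrp_iff.2 ⟨γ * (n * m), Nat.mul_pos hγ (Nat.mul_pos hn hm), ?_⟩
  have hpow : w ^ (γ * (n * m)) = (u ^ n) ^ (α * m) * (v ^ m) ^ (β * n) := by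
    rw [pow_mul, hw, mul_pow, ← pow_mul, ← pow_mul, ← pow_mul, ← pow_mul]
    ring_nf
  have hmem : (u ^ n) ^ (α * m) * (v ^ m) ^ (β * n) ∈ X ^ ((α + β) * (n * m)) := by
    rw [show (α + β) * (n * m) = n * (α * m) + m * (β * n) by ring, pow_add, pow_mul X n,
      pow_mul X m]
    exact Set.mul_mem_mul (Set.pow_mem_pow hun) (Set.pow_mem_pow hvm)
  rw [hpow]
  exact Set.pow_subset_pow_right hX (Nat.mul_le_mul_right _ hαβγ) hmem

theorem mem_convexHullGrp_of_pow_eq_pow (hX : 1 ∈ X) {x d : G} (hx : x ∈ convexHullGrp X)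
    {j n : ℕ} (hn : 1 ≤ n) (hjn : j ≤ n) (hd : d ^ n = x ^ j) : d ∈ convexHullGrp X :=
  mem_convexHullGrp_of_pow_eq_mul hX hx hx hn (Nat.add_zero j ▸ hjn) (by simp [hd])

end ConvexHull

section Extension

variable {Z V : Type*} [CommGroup Z] [CommGroup V] {X : Set Z} {θ : Z → V}

theorem IsLocalMulHom.map_eq_pow_of_pow_eq (hθ : IsLocalMulHom (convexHullGrp X) θ)
    (hX : 1 ∈ X) {x d : Z} (hx : x ∈ convexHullGrp X) {n : ℕ} (hn : 1 ≤ n) (hd : d ^ n = x) :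
    θ x = θ d ^ n := by
  obtain ⟨n, rfl⟩ : ∃ m, n = m + 1 := ⟨n - 1, by omega⟩
  rw [← hd]
  refine hθ.map_pow_succ fun j hj =>
    mem_convexHullGrp_of_pow_eq_pow (j := j + 1) hX hx hn (by omega) ?_
  rw [← hd, ← pow_mul, ← pow_mul, mul_comm]

variable [IsMulTorsionFree Z]

theorem IsLocalMulHom.pow_map_eq_pow_map
    (hdiv : ∀ z : Z, ∀ n : ℕ, 1 ≤ n → ∃ x : Z, x ^ n = z)
    (hθ : IsLocalMulHom (convexHullGrp X) θ)
    (hX : 1 ∈ X) {x y : Z} (hx : x ∈ convexHullGrp X) (hy : y ∈ convexHullGrp X) {n m : ℕ}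
    (hn : 1 ≤ n) (hm : 1 ≤ m) (h : x ^ n = y ^ m) : θ x ^ n = θ y ^ m := by
  obtain ⟨ρ, hρ⟩ := hdiv (x ^ n) (n * m) (Nat.mul_pos hn hm)
  have hρx : ρ ^ m = x := pow_left_injective (n := n) (by omega) <| by
    simp only [← pow_mul, mul_comm m n, hρ]
  have hρy : ρ ^ n = y := pow_left_injective (n := m) (by omega) <| by
    simp only [← pow_mul, hρ, h]
  rw [hθ.map_eq_pow_of_pow_eq hX hx hm hρx, hθ.map_eq_pow_of_pow_eq hX hy hn hρy, ← pow_mul,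
    ← pow_mul, mul_comm]

theorem IsLocalMulHom.exists_monoidHom_map_pow
    (hdiv : ∀ z : Z, ∀ n : ℕ, 1 ≤ n → ∃ x : Z, x ^ n = z)
    (hθ : IsLocalMulHom (convexHullGrp X) θ)
    (hX : 1 ∈ X) (habs : ∀ z : Z, ∃ n, 1 ≤ n ∧ ∃ x ∈ convexHullGrp X, x ^ n = z) :
    ∃ ψ : Z →* V, ∀ x ∈ convexHullGrp X, ∀ n, 1 ≤ n → ψ (x ^ n) = θ x ^ n := by
  choose N hN r hr hrz using habs
  have hψ : ∀ x ∈ convexHullGrp X, ∀ n, 1 ≤ n → θ (r (x ^ n)) ^ N (x ^ n) = θ x ^ n :=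
    fun x hx n hn => hθ.pow_map_eq_pow_map hdiv hX (hr _) hx (hN _) hn (hrz _)
  refine ⟨MonoidHom.mk' (fun z => θ (r z) ^ N z) fun a b => ?_, hψ⟩
  obtain ⟨u, hu⟩ := hdiv (r a) (2 * N b) (by linarith [hN b])
  obtain ⟨v, hv⟩ := hdiv (r b) (2 * N a) (by linarith [hN a])
  have hu2 : u ^ 2 ∈ convexHullGrp X :=
    mem_convexHullGrp_of_pow_eq_pow hX (hr a) (hN b) (hN b) <| by rw [← pow_mul, hu, pow_one]
  have hv2 : v ^ 2 ∈ convexHullGrp X :=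
    mem_convexHullGrp_of_pow_eq_pow hX (hr b) (hN a) (hN a) <| by rw [← pow_mul, hv, pow_one]
  have hu1 : u ∈ convexHullGrp X :=
    mem_convexHullGrp_of_pow_eq_pow hX hu2 one_le_two one_le_two (by rw [pow_one])
  have hv1 : v ∈ convexHullGrp X :=
    mem_convexHullGrp_of_pow_eq_pow hX hv2 one_le_two one_le_two (by rw [pow_one])
  have huv : u * v ∈ convexHullGrp X :=
    mem_convexHullGrp_of_pow_eq_mul (α := 1) (β := 1) hX hu2 hv2 one_le_two le_rfl
      (by rw [mul_pow, pow_one, pow_one])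
  have hab : (u * v) ^ (2 * N a * N b) = a * b := by
    conv_rhs => rw [← hrz a, ← hrz b, ← hu, ← hv, ← pow_mul, ← pow_mul]
    rw [mul_pow]
    ring_nf
  have hθa : θ (r a) = θ u ^ (2 * N b) :=
    hθ.map_eq_pow_of_pow_eq hX (hr a) (by linarith [hN b]) hu
  have hθb : θ (r b) = θ v ^ (2 * N a) :=
    hθ.map_eq_pow_of_pow_eq hX (hr b) (by linarith [hN a]) hv
  show θ (r (a * b)) ^ N (a * b) = θ (r a) ^ N a * θ (r b) ^ N b
  rw [← hab, hψ _ huv _ (by nlinarith [hN a, hN b]), hθ u v hu1 hv1 huv, mul_pow, hθa, hθb,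
    ← pow_mul, ← pow_mul]
  ring_nf

end Extension

theorem MonoidHom.eq_of_eqOn_of_forall_exists_pow_eq {M N : Type*} [Monoid M] [Monoid N]
    {T : Set M} (habs : ∀ z : M, ∃ n, 1 ≤ n ∧ ∃ x ∈ T, x ^ n = z) {ψ₁ ψ₂ : M →* N}
    (h : ∀ x ∈ T, ψ₁ x = ψ₂ x) : ψ₁ = ψ₂ := by
  ext z
  obtain ⟨n, -, x, hx, rfl⟩ := habs z
  rw [map_pow, map_pow, h x hx]

theorem stmt5_general (Z V : Type*) [CommGroup Z] [CommGroup V]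
    (hdiv : ∀ z : Z, ∀ n : ℕ, 1 ≤ n → ∃ x : Z, x ^ n = z)
    (htf : ∀ x : Z, ∀ n : ℕ, 1 ≤ n → x ^ n = 1 → x = 1)
    (W W₁ : Set Z) (θ : Z → V)
    (hθloc : ∀ x y : Z, x ∈ W → y ∈ W → x * y ∈ W → θ (x * y) = θ x * θ y)
    (hone : (1 : Z) ∈ W₁)
    (hgen : ∀ z : Z, ∃ n : ℕ, 1 ≤ n ∧ ∃ f : Fin n → Z,
      (∀ i, f i ∈ W₁) ∧ (List.ofFn f).prod = z)
    (k : ℕ) (hk : 1 ≤ k)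
    (hch : convexHullGrp {x : Z | x ^ k ∈ W₁} ⊆ W₁) (hW₁W : W₁ ⊆ W) :
    ∃ θbar : Z →* V,
      (∀ x ∈ convexHullGrp {x : Z | x ^ k ∈ W₁}, θbar x = θ x) ∧
      (∀ ψ : Z →* V, (∀ x ∈ convexHullGrp {x : Z | x ^ k ∈ W₁}, ψ x = θ x) → ψ = θbar) ∧
      (∀ n : ℕ, 1 ≤ n → ∀ f g : Fin n → Z, (∀ i, f i ∈ W₁) → (∀ i, (g i) ^ k = f i) →
        θbar ((List.ofFn f).prod) = ((List.ofFn fun i => θ (g i)).prod) ^ k) := by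
  have : IsMulTorsionFree Z := .of_not_isOfFinOrder fun x hx hfin =>
    let ⟨n, hn, h⟩ := isOfFinOrder_iff_pow_eq_one.1 hfin
    hx (htf x n hn h)
  set S : Set Z := {x | x ^ k ∈ W₁}
  have hS : (1 : Z) ∈ S := by simpa [S] using hone
  have hθS : IsLocalMulHom (convexHullGrp S) θ := IsLocalMulHom.mono hθloc (hch.trans hW₁W)
  have habs : ∀ z : Z, ∃ n, 1 ≤ n ∧ ∃ x ∈ convexHullGrp S, x ^ n = z := by
    intro z
    obtain ⟨n, hn, f, hf, rfl⟩ := hgen z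
    choose g hg using fun i => hdiv (f i) k hk
    obtain ⟨x, hx⟩ := hdiv (List.ofFn f).prod (k * n) (Nat.mul_pos hk hn)
    refine ⟨k * n, Nat.mul_pos hk hn, x,
      ⟨n, hn, g, fun i => by simpa [S, hg i] using hf i, ?_⟩, hx⟩
    refine pow_left_injective (n := k) (by omega) ?_
    simp only [← pow_mul, mul_comm n k, hx, List.prod_ofFn, ← Finset.prod_pow, hg]
  obtain ⟨ψ, hψ⟩ := hθS.exists_monoidHom_map_pow hdiv hS habs
  have hψθ : ∀ x ∈ convexHullGrp S, ψ x = θ x := fun x hx => by simpa using hψ x hx 1 le_rfl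
  refine ⟨ψ, hψθ, fun ψ' hψ' => MonoidHom.eq_of_eqOn_of_forall_exists_pow_eq habs
    fun x hx => (hψ' x hx).trans (hψθ x hx).symm, fun n _ f g hf hg => ?_⟩
  obtain rfl : f = fun i => g i ^ k := funext fun i => (hg i).symm
  have hgS : ∀ i, g i ∈ convexHullGrp S := fun i => subset_convexHullGrp (hf i)
  simp only [List.prod_ofFn, map_prod, map_pow, hψθ _ (hgS _), Finset.prod_pow]

/-- Let `Z` be a divisible torsion-free abelian group with identity `e` and `V` an abelian
group. Let `W ⊆ Z` and `θ : W → V` a local homomorphism. Suppose `W₁ ⊆ Z` is a symmetric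
subset (`W₁⁻¹ = W₁`) with `e ∈ W₁` generating `Z` (every element of `Z` is a finite
product of elements of `W₁`), and `k ≥ 1` is such that `ch(W₁^{1/k}) ⊆ W₁ ⊆ W`. Then
there is a unique group homomorphism `θ̄ : Z → V` with `θ̄ = θ` on `ch(W₁^{1/k})`;
moreover `θ̄(y₁⋯yₙ) = (θ(y₁^{1/k})⋯θ(yₙ^{1/k}))^k` for all `n ≥ 1` and `y₁, …, yₙ ∈ W₁`,
where `y^{1/k}` denotes the unique `k`-th root of `y` in `Z`. -/
theorem stmt5 (Z V : Type*) [CommGroup Z] [CommGroup V]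
    (hdiv : ∀ z : Z, ∀ n : ℕ, 1 ≤ n → ∃ x : Z, x ^ n = z)
    (htf : ∀ x : Z, ∀ n : ℕ, 1 ≤ n → x ^ n = 1 → x = 1)
    (W W₁ : Set Z) (θ : Z → V)
    (hθloc : ∀ x y : Z, x ∈ W → y ∈ W → x * y ∈ W → θ (x * y) = θ x * θ y)
    (hsym : W₁⁻¹ = W₁) (hone : (1 : Z) ∈ W₁)
    (hgen : ∀ z : Z, ∃ n : ℕ, 1 ≤ n ∧ ∃ f : Fin n → Z,
      (∀ i, f i ∈ W₁) ∧ (List.ofFn f).prod = z)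
    (k : ℕ) (hk : 1 ≤ k)
    (hch : convexHullGrp {x : Z | x ^ k ∈ W₁} ⊆ W₁) (hW₁W : W₁ ⊆ W) :
    ∃ θbar : Z →* V,
      (∀ x ∈ convexHullGrp {x : Z | x ^ k ∈ W₁}, θbar x = θ x) ∧
      (∀ ψ : Z →* V, (∀ x ∈ convexHullGrp {x : Z | x ^ k ∈ W₁}, ψ x = θ x) → ψ = θbar) ∧
      (∀ n : ℕ, 1 ≤ n → ∀ f g : Fin n → Z, (∀ i, f i ∈ W₁) → (∀ i, (g i) ^ k = f i) →
        θbar ((List.ofFn f).prod) = ((List.ofFn fun i => θ (g i)).prod) ^ k) :=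
  stmt5_general Z V hdiv htf W W₁ θ hθloc hone hgen k hk hch hW₁W
end
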